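/- arXiv:2103.00403 — 4 statements merged into one kernel-verified Lean document; each statement's English description precedes it below -/
import Mathlib

section
/- If G1 and G2 are 2-cographs on disjoint vertex sets, then any 1-sum of G1 and G2 (obtained by identifying a vertex of G1 with a vertex of G2) is a 2-cograph. -/
/-- A graph is 2-connected if it has at least 3 vertices, is connected,
and remains connected after deleting any single vertex. -/
def TwoConnected {V : Type} [Fintype V] (G : SimpleGraph V) : Prop :=
  3 ≤ Fintype.card V ∧ G.Connected ∧
    ∀ v : V, (G.induce ({v}ᶜ : Set V)).Connected

/-- A graph is a 2-cograph if it has no induced subgraph `H` such that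
both `H` and its complement are 2-connected. -/
def IsTwoCograph {V : Type} [Fintype V] (G : SimpleGraph V) : Prop :=
  ∀ S : Finset V, ¬ (TwoConnected (G.induce (S : Set V)) ∧
      TwoConnected ((G.induce (S : Set V))ᶜ))

/-- A 1-sum of `G` and `H`, identifying the vertex `u` of `G` with the
vertex `w` of `H` (the identified vertex is represented by `Sum.inl u`). -/
def oneSumGraph {V W : Type} (G : SimpleGraph V) (H : SimpleGraph W) (u : V) (w : W) :
    SimpleGraph (V ⊕ {x : W // x ≠ w}) :=
  SimpleGraph.fromRel fun x y =>
    match x, y with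
    | .inl a, .inl b => G.Adj a b
    | .inr a, .inr b => H.Adj (a : W) (b : W)
    | .inl a, .inr b => a = u ∧ H.Adj w (b : W)
    | .inr _, .inl _ => False

/-!
An induced subgraph of a 1-sum either lies within one summand, and is then an induced subgraph
of `G` or of `H`, or it has vertices of both summands other than the identified vertex; that
vertex then separates them, so the induced subgraph is not 2-connected.
-/

open SimpleGraph

def SimpleGraph.Iso.compl {α β : Type*} {G : SimpleGraph α} {G' : SimpleGraph β} (e : G ≃g G') :
    Gᶜ ≃g G'ᶜ where
  toEquiv := e.toEquiv
  map_rel_iff' := by simp [e.map_adj_iff]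

theorem SimpleGraph.Reachable.of_adj_closed {α : Type*} {K : SimpleGraph α} {p : α → Prop}
    (hp : ∀ a b, K.Adj a b → p a → p b) {x y : α} (h : K.Reachable x y) (hx : p x) : p y := by
  obtain ⟨q⟩ := h
  induction q with
  | nil => exact hx
  | cons hadj _ ih => exact ih (hp _ _ hadj hx)

variable {α β V W : Type}

theorem TwoConnected.of_iso [Fintype α] [Fintype β] {G : SimpleGraph α} {G' : SimpleGraph β}
    (e : G ≃g G') (h : TwoConnected G) : TwoConnected G' := by
  obtain ⟨hcard, hconn, hdel⟩ := h
  refine ⟨hcard.trans (Fintype.card_congr e.toEquiv).le, e.connected_iff.mp hconn, fun v => ?_⟩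
  have hmaps : Set.MapsTo e ({e.symm v}ᶜ : Set α) {v}ᶜ := fun x hx hxv =>
    hx (e.symm_apply_eq.mpr hxv.symm).symm
  refine (hdel (e.symm v)).map (induceHom e.toHom hmaps) fun y => ?_
  refine ⟨⟨e.symm y, fun h => y.2 (by simpa using h)⟩, ?_⟩
  ext
  simp

theorem not_twoConnected_induce_of_separates {K : SimpleGraph α} (p : α → Prop) (c : α)
    (hsep : ∀ a b, K.Adj a b → p a → ¬ p b → a = c ∨ b = c) {s : Set α} [Fintype s] {x y : α}
    (hx : x ∈ s) (hy : y ∈ s) (hxc : x ≠ c) (hyc : y ≠ c) (hpx : p x) (hpy : ¬ p y) :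
    ¬ TwoConnected (K.induce s) := by
  rintro ⟨-, hconn, hdel⟩
  by_cases hc : c ∈ s
  · have hreach := (hdel ⟨c, hc⟩).preconnected
      ⟨⟨x, hx⟩, fun h => hxc (congrArg Subtype.val h)⟩
      ⟨⟨y, hy⟩, fun h => hyc (congrArg Subtype.val h)⟩
    refine hpy (hreach.of_adj_closed (p := fun z => p z.1.1) ?_ hpx)
    rintro ⟨⟨a, _⟩, ha⟩ ⟨⟨b, _⟩, hb⟩ hab hpa
    by_contra hpb
    rcases hsep a b hab hpa hpb with rfl | rfl
    · exact ha rfl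
    · exact hb rfl
  · have hreach := hconn.preconnected ⟨x, hx⟩ ⟨y, hy⟩
    refine hpy (hreach.of_adj_closed (p := fun z => p z.1) ?_ hpx)
    rintro ⟨a, ha⟩ ⟨b, hb⟩ hab hpa
    by_contra hpb
    rcases hsep a b hab hpa hpb with rfl | rfl
    · exact hc ha
    · exact hc hb

noncomputable def SimpleGraph.Embedding.induceIsoOfSubsetRange {G : SimpleGraph α}
    {G' : SimpleGraph β} (f : G ↪g G') (s : Finset β) (hs : (s : Set β) ⊆ Set.range f) :
    G.induce (s.preimage f f.injective.injOn : Set α) ≃g G'.induce (s : Set β) where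
  toEquiv := Equiv.ofBijective (fun x => ⟨f x, by simpa using x.2⟩) <| by
    refine ⟨fun x y hxy => Subtype.ext (f.injective (congrArg Subtype.val hxy)), fun y => ?_⟩
    obtain ⟨x, hx⟩ := hs y.2
    exact ⟨⟨x, by simp [hx]⟩, Subtype.ext hx⟩
  map_rel_iff' := by simp

theorem IsTwoCograph.not_twoConnected_induce_of_subset_range [Fintype α] [Fintype β]
    {G : SimpleGraph α} {G' : SimpleGraph β} (hG : IsTwoCograph G) (f : G ↪g G')
    {s : Finset β} (hs : (s : Set β) ⊆ Set.range f) :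
    ¬ (TwoConnected (G'.induce (s : Set β)) ∧ TwoConnected (G'.induce (s : Set β))ᶜ) := by
  rintro ⟨h, hc⟩
  have e := f.induceIsoOfSubsetRange s hs
  exact hG _ ⟨h.of_iso e.symm, hc.of_iso e.symm.compl⟩

section oneSumGraph

variable {G : SimpleGraph V} {H : SimpleGraph W} {u : V} {w : W}

@[simp]
theorem oneSumGraph_adj_inl_inl {a b : V} :
    (oneSumGraph G H u w).Adj (.inl a) (.inl b) ↔ G.Adj a b := by
  simp only [oneSumGraph, fromRel_adj, ne_eq, Sum.inl.injEq]
  exact ⟨fun ⟨_, h⟩ => h.elim id (·.symm), fun h => ⟨G.ne_of_adj h, .inl h⟩⟩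

@[simp]
theorem oneSumGraph_adj_inr_inr {a b : {x : W // x ≠ w}} :
    (oneSumGraph G H u w).Adj (.inr a) (.inr b) ↔ H.Adj a b := by
  simp only [oneSumGraph, fromRel_adj, ne_eq, Sum.inr.injEq]
  exact ⟨fun ⟨_, h⟩ => h.elim id (·.symm),
    fun h => ⟨fun hab => H.ne_of_adj h (congrArg Subtype.val hab), .inl h⟩⟩

@[simp]
theorem oneSumGraph_adj_inl_inr {a : V} {b : {x : W // x ≠ w}} :
    (oneSumGraph G H u w).Adj (.inl a) (.inr b) ↔ a = u ∧ H.Adj w b := by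
  simp [oneSumGraph]

@[simp]
theorem oneSumGraph_adj_inr_inl {a : {x : W // x ≠ w}} {b : V} :
    (oneSumGraph G H u w).Adj (.inr a) (.inl b) ↔ b = u ∧ H.Adj w a := by
  rw [adj_comm, oneSumGraph_adj_inl_inr]

theorem oneSumGraph_eq_of_adj_of_isLeft {x y : V ⊕ {x : W // x ≠ w}}
    (h : (oneSumGraph G H u w).Adj x y) (hx : x.isLeft) (hy : ¬ y.isLeft) : x = .inl u := by
  rcases x with a | a <;> rcases y with b | b <;> simp_all

variable (G H u w)

def oneSumGraph.leftEmbedding : G ↪g oneSumGraph G H u w where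
  toEmbedding := .inl
  map_rel_iff' := oneSumGraph_adj_inl_inl

def oneSumGraph.rightEmbedding [DecidableEq W] : H ↪g oneSumGraph G H u w where
  toFun c := if h : c = w then .inl u else .inr ⟨c, h⟩
  inj' c d := by
    by_cases hc : c = w <;> by_cases hd : d = w <;> simp [hc, hd]
  map_rel_iff' {c d} := by
    by_cases hc : c = w <;> by_cases hd : d = w <;> simp [hc, hd, H.adj_comm]

end oneSumGraph

theorem oneSum_of_twoCographs {V W : Type} [Fintype V] [Fintype W] [DecidableEq W]
    (G : SimpleGraph V) (H : SimpleGraph W) (u : V) (w : W)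
    (hG : IsTwoCograph G) (hH : IsTwoCograph H) :
    IsTwoCograph (oneSumGraph G H u w) := by
  intro S hS
  by_cases hL : (S : Set _) ⊆ Set.range (oneSumGraph.leftEmbedding G H u w)
  · exact hG.not_twoConnected_induce_of_subset_range _ hL hS
  by_cases hR : (S : Set _) ⊆ Set.range (oneSumGraph.rightEmbedding G H u w)
  · exact hH.not_twoConnected_induce_of_subset_range _ hR hS
  obtain ⟨_ | b, hbS, hb⟩ := Set.not_subset.mp hL
  · exact hb ⟨_, rfl⟩
  obtain ⟨a | _, haS, ha⟩ := Set.not_subset.mp hR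
  · have hau : a ≠ u := by
      rintro rfl
      exact ha ⟨w, dif_pos rfl⟩
    exact not_twoConnected_induce_of_separates (fun z => z.isLeft) (.inl u)
      (fun _ _ h hx hy => .inl (oneSumGraph_eq_of_adj_of_isLeft h hx hy)) haS hbS
      (by simpa using hau) Sum.inr_ne_inl rfl (by simp) hS.1
  · exact ha ⟨_, dif_neg _⟩
end

section
/- If G is a 2-connected simple graph, then the complement of G is 2-connected if and only if G has no complete bipartite subgraph using at least |V(G)| - 1 vertices. -/
namespace Finset

variable {α : Type*} [Fintype α] [DecidableEq α]

theorem card_sub_one_le_card_iff {s : Finset α} :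
    Fintype.card α - 1 ≤ #s ↔ s = univ ∨ ∃ v, s = {v}ᶜ := by
  constructor
  · intro hs
    by_contra! h
    obtain ⟨v, hv⟩ : ∃ v, v ∉ s := by simpa [eq_univ_iff_forall] using h.1
    have hsub : s ⊆ {v}ᶜ := fun x hx => by simpa using ne_of_mem_of_not_mem hx hv
    exact h.2 v (eq_of_subset_of_card_le hsub (by simpa [card_compl] using hs))
  · rintro (rfl | ⟨v, rfl⟩) <;> simp [card_compl]

end Finset

open Finset

namespace SimpleGraph

variable {V : Type} [DecidableEq V]

theorem compl_induce_connected_iff (G : SimpleGraph V) (s : Finset V) :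
    (Gᶜ.induce (s : Set V)).Connected ↔
      s.Nonempty ∧ ¬ ∃ A B : Finset V, A.Nonempty ∧ B.Nonempty ∧ A ∪ B = s ∧
        G.IsCompleteBetween A B := by
  constructor
  · intro hconn
    refine ⟨?_, ?_⟩
    · obtain ⟨⟨x, hx⟩⟩ := hconn.nonempty
      exact ⟨x, hx⟩
    rintro ⟨A, B, ⟨a, ha⟩, ⟨b, hb⟩, rfl, hAB⟩
    have hbA : b ∉ A := fun h => Set.disjoint_left.mp hAB.disjoint h hb
    obtain ⟨p⟩ := hconn.preconnected ⟨a, by simp [ha]⟩ ⟨b, by simp [hb]⟩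
    -- a `Gᶜ`-walk from `A` to `B` inside `A ∪ B` has an edge leaving `A`, i.e. a `Gᶜ`-edge into `B`
    obtain ⟨d, -, hd₁, hd₂⟩ := p.exists_boundary_dart {x | x.1 ∈ A} ha hbA
    have hd₂B : d.snd.1 ∈ B := (mem_union.mp (by simp)).resolve_left hd₂
    exact (d.adj : Gᶜ.Adj _ _).2 (hAB hd₁ hd₂B)
  · rintro ⟨⟨u, hu⟩, hsep⟩
    refine (connected_iff _).mpr ⟨fun x y => ?_, ⟨⟨u, hu⟩⟩⟩
    by_contra hxy
    classical
    let R : V → Prop := fun z => ∃ hz : z ∈ s, (Gᶜ.induce (s : Set V)).Reachable x ⟨z, hz⟩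
    refine hsep ⟨s.filter R, s.filter (¬ R ·), ⟨x, by simp [R]⟩, ⟨y, by simp [R, hxy]⟩,
      filter_union_filter_not_eq _ _, fun a ha b hb => ?_⟩
    have haR : R a := (mem_filter.mp ha).2
    have hbR : ¬ R b := (mem_filter.mp hb).2
    have hab : a ≠ b := by rintro rfl; exact hbR haR
    obtain ⟨_, hxa⟩ := haR
    by_contra hGab
    exact hbR ⟨(mem_filter.mp hb).1, hxa.trans (Adj.reachable ⟨hab, hGab⟩)⟩

variable [Fintype V]

theorem twoConnected_iff_forall_induce_connected (H : SimpleGraph V) :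
    TwoConnected H ↔ 3 ≤ Fintype.card V ∧
      ∀ s : Finset V, Fintype.card V - 1 ≤ #s → (H.induce (s : Set V)).Connected := by
  rw [TwoConnected, ← (induceUnivIso H).connected_iff]
  refine and_congr_right' ⟨fun ⟨huniv, hdel⟩ s hs => ?_, fun h => ⟨?_, fun v => ?_⟩⟩
  · obtain rfl | ⟨v, rfl⟩ := card_sub_one_le_card_iff.mp hs
    · rwa [coe_univ]
    · rw [coe_compl, coe_singleton]
      exact hdel v
  · have := h univ (card_sub_one_le_card_iff.mpr (.inl rfl))
    rwa [coe_univ] at this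
  · have := h {v}ᶜ (card_sub_one_le_card_iff.mpr (.inr ⟨v, rfl⟩))
    rwa [coe_compl, coe_singleton] at this

end SimpleGraph

open SimpleGraph

theorem complement_twoConnected_iff {V : Type} [Fintype V] (G : SimpleGraph V)
    (hG : TwoConnected G) :
    TwoConnected Gᶜ ↔
      ¬ ∃ A B : Finset V, A.Nonempty ∧ B.Nonempty ∧ Disjoint A B ∧
        Fintype.card V - 1 ≤ A.card + B.card ∧
        ∀ a ∈ A, ∀ b ∈ B, G.Adj a b := by
  classical
  have hcard : 3 ≤ Fintype.card V := hG.1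
  rw [twoConnected_iff_forall_induce_connected, and_iff_right hcard]
  simp only [compl_induce_connected_iff]
  constructor
  · rintro h ⟨A, B, hA, hB, hAB, hcard, hcomplete⟩
    exact (h (A ∪ B) (by rwa [card_union_of_disjoint hAB])).2 ⟨A, B, hA, hB, rfl, hcomplete⟩
  · intro h s hs
    refine ⟨card_pos.mp (by omega), ?_⟩
    rintro ⟨A, B, hA, hB, rfl, hcomplete⟩
    have hAB : Disjoint A B := disjoint_coe.mp hcomplete.disjoint
    exact h ⟨A, B, hA, hB, hAB, by rwa [← card_union_of_disjoint hAB], hcomplete⟩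
end

section
/- Let G be the complement of a cycle of length at least 5. Then G is not a 2-cograph, but every proper induced subgraph of G is a 2-cograph. -/
/-!
Rotating the deleted vertex to the end shows that deleting any vertex from the cycle `C_n` leaves
the path `P_{n-1}`, which is connected and, for `n ≥ 5`, has a connected complement; hence both
`C_n` and `C_nᶜ` are 2-connected. Conversely, if `U` is a proper subset of the vertices, some
`u ∈ U` has `u - 1 ∉ U`, so `u` has at most one neighbour in `C_n[U]`, which therefore is not
2-connected. Since complementation commutes with taking induced subgraphs, the complement of an
induced subgraph of `C_nᶜ[S]` with `S` proper is such a `C_n[U]`.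
-/

open SimpleGraph

namespace SimpleGraph

variable {V W : Type} {G : SimpleGraph V} {G' : SimpleGraph W}

lemma induce_compl (G : SimpleGraph V) (s : Set V) : (G.induce s)ᶜ = Gᶜ.induce s := by
  ext a b
  simp [Subtype.ext_iff]

def Iso.compl_s10 (φ : G ≃g G') : Gᶜ ≃g G'ᶜ where
  toEquiv := φ.toEquiv
  map_rel_iff' := by simp [φ.map_adj_iff]

def Iso.induceComplSingleton (φ : G ≃g G') {v : V} {w : W} (h : φ v = w) :
    G.induce {v}ᶜ ≃g G'.induce {w}ᶜ where
  toEquiv := φ.toEquiv.subtypeEquiv fun a => by simp [← h]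
  map_rel_iff' := by simp [φ.map_adj_iff]

noncomputable def induceInduceIso (G : SimpleGraph V) (s : Set V) (t : Set s) :
    (G.induce s).induce t ≃g G.induce (Subtype.val '' t) where
  toEquiv := Equiv.Set.image Subtype.val t Subtype.val_injective
  map_rel_iff' := by simp [Equiv.Set.image, Equiv.Set.imageOfInjOn]

end SimpleGraph

section TwoConnected

variable {V W : Type} [Fintype V] [Fintype W] {G : SimpleGraph V} {G' : SimpleGraph W}

lemma Fintype.exists_ne_ne_of_three_le_card (h : 3 ≤ Fintype.card V) (x y : V) :
    ∃ v, v ≠ x ∧ v ≠ y := by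
  classical
  obtain ⟨v, -, hv⟩ := Finset.exists_mem_notMem_of_card_lt_card
    (s := {x, y}) (t := Finset.univ) (Finset.card_le_two.trans_lt (by simp; omega))
  exact ⟨v, by simpa [not_or] using hv⟩

lemma TwoConnected.of_iso_s10 (φ : G ≃g G') (h : TwoConnected G) : TwoConnected G' := by
  obtain ⟨hcard, hconn, hdel⟩ := h
  refine ⟨Fintype.card_congr φ.toEquiv ▸ hcard, φ.connected_iff.mp hconn, fun w => ?_⟩
  exact (φ.induceComplSingleton (φ.apply_symm_apply w)).connected_iff.mp (hdel _)

lemma twoConnected_of_connected_induce_compl (hcard : 3 ≤ Fintype.card V)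
    (h : ∀ v, (G.induce {v}ᶜ).Connected) : TwoConnected G := by
  have : Nonempty V := Fintype.card_pos_iff.mp (by omega)
  refine ⟨hcard, (connected_iff G).mpr ⟨fun x y => ?_, inferInstance⟩, h⟩
  obtain ⟨v, hvx, hvy⟩ := Fintype.exists_ne_ne_of_three_le_card hcard x y
  exact ((h v).preconnected ⟨x, hvx.symm⟩ ⟨y, hvy.symm⟩).map (Embedding.induce _).toHom

lemma TwoConnected.exists_adj_adj_ne (h : TwoConnected G) (v : V) :
    ∃ a b, a ≠ b ∧ G.Adj v a ∧ G.Adj v b := by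
  obtain ⟨hcard, hconn, hdel⟩ := h
  have : Nontrivial V := Fintype.one_lt_card_iff_nontrivial.mp (by omega)
  obtain ⟨a, hva⟩ := hconn.preconnected.exists_adj_of_nontrivial v
  obtain ⟨z, hzv, hza⟩ := Fintype.exists_ne_ne_of_three_le_card hcard v a
  have : Nontrivial ({a}ᶜ : Set V) :=
    nontrivial_of_ne ⟨v, hva.ne⟩ ⟨z, hza⟩ (by simpa [Subtype.ext_iff] using hzv.symm)
  obtain ⟨⟨b, hba⟩, hvb⟩ := (hdel a).preconnected.exists_adj_of_nontrivial ⟨v, hva.ne⟩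
  exact ⟨a, b, Ne.symm hba, hva, hvb⟩

lemma not_isTwoCograph_of_twoConnected (h : TwoConnected G) (hc : TwoConnected Gᶜ) :
    ¬ IsTwoCograph G := by
  have induceUniv (H : SimpleGraph V) : H.induce (Finset.univ : Finset V) ≃g H :=
    (Iso.refl.induce (by simp)).trans H.induceUnivIso
  intro hG
  refine hG Finset.univ ⟨h.of_iso_s10 (induceUniv G).symm, ?_⟩
  rw [induce_compl]
  exact hc.of_iso_s10 (induceUniv Gᶜ).symm

end TwoConnected

open scoped Fin.NatCast in
lemma Fin.exists_mem_sub_one_notMem {n : ℕ} [NeZero n] {U : Set (Fin n)} (hne : U.Nonempty)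
    (hU : U ≠ Set.univ) : ∃ u ∈ U, u - 1 ∉ U := by
  by_contra! h
  obtain ⟨u, hu⟩ := hne
  have hsub : ∀ k : ℕ, u - (k : Fin n) ∈ U := by
    intro k
    induction k with
    | zero => simpa
    | succ k ih => simpa [sub_add_eq_sub_sub] using h _ ih
  exact hU (Set.eq_univ_of_forall fun x => by simpa using hsub (u - x).val)

namespace SimpleGraph

variable {m : ℕ}

def cycleGraph.rotate (d : Fin (m + 2)) : cycleGraph (m + 2) ≃g cycleGraph (m + 2) where
  toEquiv := Equiv.addRight d
  map_rel_iff' := by simp [cycleGraph_adj]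

lemma cycleGraph_adj_castSucc {i j : Fin (m + 1)} :
    (cycleGraph (m + 2)).Adj i.castSucc j.castSucc ↔ (pathGraph (m + 1)).Adj i j := by
  rw [cycleGraph_adj', pathGraph_adj]
  rcases lt_trichotomy i j with h | rfl | h
  · rw [Fin.coe_sub_iff_lt.mpr (Fin.castSucc_lt_castSucc_iff.mpr h),
      Fin.coe_sub_iff_le.mpr (Fin.castSucc_le_castSucc_iff.mpr h.le)]
    simp only [Fin.val_castSucc, Fin.lt_def] at h ⊢
    omega
  · simp
  · rw [Fin.coe_sub_iff_le.mpr (Fin.castSucc_le_castSucc_iff.mpr h.le),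
      Fin.coe_sub_iff_lt.mpr (Fin.castSucc_lt_castSucc_iff.mpr h)]
    simp only [Fin.val_castSucc, Fin.lt_def] at h ⊢
    omega

def cycleGraph.induceComplLastIso :
    pathGraph (m + 1) ≃g (cycleGraph (m + 2)).induce {Fin.last (m + 1)}ᶜ where
  toEquiv := finSuccAboveEquiv (Fin.last (m + 1))
  map_rel_iff' {i j} := by
    change (cycleGraph _).Adj ((Fin.last _).succAbove i) ((Fin.last _).succAbove j) ↔ _
    simp [cycleGraph_adj_castSucc]

def cycleGraph.induceComplIso (v : Fin (m + 2)) :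
    (cycleGraph (m + 2)).induce {v}ᶜ ≃g pathGraph (m + 1) :=
  ((cycleGraph.rotate (Fin.last (m + 1) - v)).induceComplSingleton
    (by simp [cycleGraph.rotate])).trans cycleGraph.induceComplLastIso.symm

lemma pathGraph_compl_connected {k : ℕ} (hk : 4 ≤ k) : (pathGraph k)ᶜ.Connected := by
  have adj : ∀ a b : Fin k, a.val + 2 ≤ b.val → (pathGraph k)ᶜ.Adj a b := by
    intro a b h
    simp only [compl_adj, pathGraph_adj, ne_eq, Fin.ext_iff]
    omega
  let first : Fin k := ⟨0, by omega⟩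
  let last : Fin k := ⟨k - 1, by omega⟩
  refine (connected_iff_exists_forall_reachable _).mpr ⟨first, fun ⟨x, hx⟩ => ?_⟩
  rcases Nat.lt_or_ge x 2 with hx2 | hx2
  · interval_cases x
    · rfl
    · exact (adj first last (by simp [first, last]; omega)).reachable.trans
        (adj _ _ (by simp [last]; omega)).symm.reachable
  · exact (adj first _ (by simpa [first] using hx2)).reachable

lemma twoConnected_cycleGraph (hm : 1 ≤ m) : TwoConnected (cycleGraph (m + 2)) :=
  twoConnected_of_connected_induce_compl (by simp; omega)
    fun v => (cycleGraph.induceComplIso v).connected_iff.mpr (pathGraph_connected _)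

lemma twoConnected_compl_cycleGraph (hm : 3 ≤ m) : TwoConnected (cycleGraph (m + 2))ᶜ :=
  twoConnected_of_connected_induce_compl (by simp; omega) fun v => by
    rw [← induce_compl]
    exact (cycleGraph.induceComplIso v).compl_s10.connected_iff.mpr
      (pathGraph_compl_connected (by omega))

lemma not_twoConnected_induce_cycleGraph {U : Set (Fin (m + 2))} [Fintype U]
    (hU : U ≠ Set.univ) : ¬ TwoConnected ((cycleGraph (m + 2)).induce U) := by
  intro h
  have hne : U.Nonempty := Set.nonempty_coe_sort.mp (Fintype.card_pos_iff.mp (by linarith [h.1]))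
  obtain ⟨u, hu, hu1⟩ := Fin.exists_mem_sub_one_notMem hne hU
  have adj_eq : ∀ w ∈ U, (cycleGraph (m + 2)).Adj u w → w = u + 1 := by
    intro w hw huw
    rw [← mem_neighborSet, cycleGraph_neighborSet] at huw
    rcases huw with rfl | rfl
    · exact absurd hw hu1
    · rfl
  obtain ⟨⟨a, ha⟩, ⟨b, hb⟩, hab, hua, hub⟩ := h.exists_adj_adj_ne ⟨u, hu⟩
  exact hab (Subtype.ext ((adj_eq a ha hua).trans (adj_eq b hb hub).symm))

end SimpleGraph

theorem complement_cycle_minimal (n : ℕ) (hn : 5 ≤ n) :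
    ¬ IsTwoCograph (SimpleGraph.cycleGraph n)ᶜ ∧
      ∀ S : Finset (Fin n), S ≠ Finset.univ →
        IsTwoCograph ((SimpleGraph.cycleGraph n)ᶜ.induce (S : Set (Fin n))) := by
  obtain ⟨m, rfl⟩ : ∃ m, n = m + 2 := ⟨n - 2, by omega⟩
  refine ⟨not_isTwoCograph_of_twoConnected (twoConnected_compl_cycleGraph (by omega))
    (by simpa using twoConnected_cycleGraph (by omega)), fun S hS T ⟨_, hT⟩ => ?_⟩
  obtain ⟨x, hxS⟩ : ∃ x, x ∉ S := by simpa [Finset.eq_univ_iff_forall] using hS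
  rw [induce_compl, induce_compl, compl_compl] at hT
  classical
  refine not_twoConnected_induce_cycleGraph (U := Subtype.val '' (T : Set S)) ?_
    (hT.of_iso_s10 (induceInduceIso _ _ _))
  intro hUniv
  obtain ⟨y, -, rfl⟩ : x ∈ Subtype.val '' (T : Set S) := hUniv ▸ Set.mem_univ x
  exact hxS y.2
end

section
/- Let G be an induced-minor-minimal non-2-cograph with at least 6 vertices, and let a-b-c-d be a path in G such that both b and c have degree two in G. Then a and d are adjacent in G. -/
/-- `H` is an induced minor of `G`: witnessed by pairwise disjoint nonempty
connected branch sets, with adjacency in `H` iff there is an edge between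
the corresponding branch sets. -/
def IsInducedMinor {V W : Type} (G : SimpleGraph V) (H : SimpleGraph W) : Prop :=
  ∃ B : W → Set V,
    (∀ w, (B w).Nonempty) ∧
    (∀ w, (G.induce (B w)).Connected) ∧
    (Pairwise fun w w' => Disjoint (B w) (B w')) ∧
    ∀ w w', w ≠ w' → (H.Adj w w' ↔ ∃ a ∈ B w, ∃ b ∈ B w', G.Adj a b)

/-- `G` is an induced-minor-minimal non-2-cograph: `G` is not a 2-cograph but
every proper induced minor of `G` (one with fewer vertices) is a 2-cograph. -/
def IsIMMNon2Cograph {V : Type} [Fintype V] (G : SimpleGraph V) : Prop :=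
  ¬ IsTwoCograph G ∧
    ∀ (W : Type) [Fintype W], ∀ H : SimpleGraph W,
      IsInducedMinor G H → Fintype.card W < Fintype.card V → IsTwoCograph H

/-!
Suppose `a` and `d` are not adjacent. By minimality, every proper induced subgraph of `G` is a
2-cograph, so `G` and `Gᶜ` are themselves 2-connected.

If `a` and `d` have a common neighbour `r`, then `a b c d r` is an induced 5-cycle. A 5-cycle is
self-complementary, hence it is a proper induced subgraph that is not a 2-cograph.

Otherwise contract the edge `bc` to a graph `H`. Since `b` has degree two, `H` is `G` with `b`
suppressed and is still 2-connected. In `Hᶜ` the contracted vertex sees every vertex except `a`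
and `d`, the edge `ad` is present, and every other vertex sees `a` or `d`, because `a` and `d`
have no common neighbour; hence `Hᶜ` is 2-connected too. So `H` is a proper induced minor that
is not a 2-cograph.
-/

open SimpleGraph Function

lemma Fintype.card_compl_singleton {V : Type} [Fintype V] [DecidableEq V] (b : V) :
    Fintype.card ({b}ᶜ : Set V) = Fintype.card V - 1 := by
  simp [Finset.filter_ne']

section Connectivity

variable {X Y : Type} {K : SimpleGraph X} {L : SimpleGraph Y}

lemma SimpleGraph.connected_of_forall_reachable (h : X) (hr : ∀ x, K.Reachable h x) :
    K.Connected :=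
  K.connected_iff.mpr ⟨fun x y => (hr x).symm.trans (hr y), ⟨h⟩⟩

lemma SimpleGraph.Adj.induce_reachable {s : Set X} {x y : X} (h : K.Adj x y) (hx : x ∈ s)
    (hy : y ∈ s) : (K.induce s).Reachable ⟨x, hx⟩ ⟨y, hy⟩ :=
  (show (K.induce s).Adj ⟨x, hx⟩ ⟨y, hy⟩ from h).reachable

lemma SimpleGraph.Connected.induce_of_contraction (hK : K.Connected) (f : X → Y) {t : Set Y}
    (hmaps : ∀ x, f x ∈ t) (hsurj : ∀ y ∈ t, ∃ x, f x = y)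
    (hadj : ∀ x x', K.Adj x x' → f x = f x' ∨ L.Adj (f x) (f x')) :
    (L.induce t).Connected := by
  let g : X → t := fun x => ⟨f x, hmaps x⟩
  have hreach : ∀ x x', K.Reachable x x' → (L.induce t).Reachable (g x) (g x') := by
    rintro x x' ⟨p⟩
    induction p with
    | nil => rfl
    | cons h _ ih =>
      rcases hadj _ _ h with heq | hL
      · exact (Subtype.ext heq : g _ = g _) ▸ ih
      · exact (hL.induce_reachable _ _).trans ih
  obtain ⟨x₀⟩ := hK.nonempty
  refine connected_of_forall_reachable (g x₀) ?_
  rintro ⟨y, hy⟩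
  obtain ⟨x, rfl⟩ := hsurj y hy
  exact hreach _ _ (hK x₀ x)

lemma twoConnected_of_connected_induce_compl_s14 [Fintype X] (hcard : 3 ≤ Fintype.card X)
    (hdel : ∀ v, (K.induce ({v}ᶜ : Set X)).Connected) : TwoConnected K := by
  classical
  refine ⟨hcard, K.connected_iff.mpr ⟨fun u v => ?_, ?_⟩, hdel⟩
  · obtain ⟨w, -, hw⟩ := Finset.exists_mem_notMem_of_card_lt_card (s := {u, v})
      (t := Finset.univ) (by grind [Finset.card_le_two, Finset.card_univ])
    simp only [Finset.mem_insert, Finset.mem_singleton, not_or] at hw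
    exact ((hdel w) ⟨u, Ne.symm hw.1⟩ ⟨v, Ne.symm hw.2⟩).map (Embedding.induce _).toHom
  · exact Fintype.card_pos_iff.mp (by omega)

lemma TwoConnected.of_equiv [Fintype X] [Fintype Y] (e : X ≃ Y)
    (he : ∀ x x', L.Adj (e x) (e x') ↔ K.Adj x x') (h : TwoConnected K) : TwoConnected L := by
  refine twoConnected_of_connected_induce_compl_s14 (Fintype.card_congr e ▸ h.1) fun y => ?_
  refine (h.2.2 (e.symm y)).induce_of_contraction (fun x => e x) ?_ ?_ ?_
  · rintro ⟨x, hx⟩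
    simpa [← Equiv.eq_symm_apply] using hx
  · intro y' hy'
    exact ⟨⟨e.symm y', by simpa [Equiv.symm_apply_eq] using hy'⟩, by simp⟩
  · exact fun x x' hxx' => Or.inr ((he _ _).2 hxx')

lemma SimpleGraph.compl_induce (s : Set X) : (K.induce s)ᶜ = Kᶜ.induce s := by
  ext x y
  simp [Subtype.ext_iff]

lemma twoConnected_induce_univ_iff [Fintype X] :
    TwoConnected (K.induce ((Finset.univ : Finset X) : Set X)) ↔ TwoConnected K := by
  let e : ((Finset.univ : Finset X) : Set X) ≃ X := Equiv.subtypeUnivEquiv (by simp)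
  exact ⟨.of_equiv e fun _ _ => Iff.rfl, .of_equiv e.symm fun _ _ => Iff.rfl⟩

lemma TwoConnected.exists_adj_ne [Fintype X] (h : TwoConnected K) {v w : X} (hvw : v ≠ w) :
    ∃ u, u ≠ w ∧ K.Adj v u := by
  classical
  obtain ⟨x, -, hx⟩ := Finset.exists_mem_notMem_of_card_lt_card (s := {v, w})
    (t := Finset.univ) (by grind [Finset.card_le_two, Finset.card_univ, TwoConnected])
  simp only [Finset.mem_insert, Finset.mem_singleton, not_or] at hx
  obtain ⟨p⟩ := (h.2.2 w) ⟨v, hvw⟩ ⟨x, hx.2⟩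
  cases p with
  | nil => exact absurd rfl hx.1
  | @cons _ u _ hadj _ => exact ⟨u, u.2, hadj⟩

end Connectivity

section Cograph

variable {X V : Type}

lemma IsTwoCograph.not_twoConnected [Fintype X] {K : SimpleGraph X} (h : IsTwoCograph K) :
    ¬(TwoConnected K ∧ TwoConnected Kᶜ) := fun ⟨hK, hKc⟩ =>
  h Finset.univ ⟨twoConnected_induce_univ_iff.2 hK, by
    rwa [compl_induce, twoConnected_induce_univ_iff]⟩

lemma isInducedMinor_induce (G : SimpleGraph V) (s : Set V) : IsInducedMinor G (G.induce s) := by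
  refine ⟨fun w => {w.1}, fun w => Set.singleton_nonempty _, fun w => ?_, ?_, ?_⟩
  · rw [induce_singleton_eq_top]
    exact connected_top
  · intro w w' h
    simpa [Subtype.ext_iff] using h
  · intro w w' _
    simp

variable [Fintype V] {G : SimpleGraph V}

lemma IsIMMNon2Cograph.not_twoConnected_induce (hG : IsIMMNon2Cograph G) {s : Set V} [Fintype s]
    (hs : Fintype.card s < Fintype.card V) :
    ¬(TwoConnected (G.induce s) ∧ TwoConnected (G.induce s)ᶜ) :=
  (hG.2 s (G.induce s) (isInducedMinor_induce G s) hs).not_twoConnected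

lemma IsIMMNon2Cograph.twoConnected (hG : IsIMMNon2Cograph G) :
    TwoConnected G ∧ TwoConnected Gᶜ := by
  obtain ⟨S, hS⟩ := not_forall.1 hG.1
  rw [not_not] at hS
  by_cases hSu : S = Finset.univ
  · subst hSu
    rwa [compl_induce, twoConnected_induce_univ_iff, twoConnected_induce_univ_iff] at hS
  · refine absurd hS (hG.not_twoConnected_induce ?_)
    simpa using Finset.card_lt_card (Finset.ssubset_univ_iff.2 hSu)

end Cograph

section Cycles

variable {X V : Type} [Fintype X] {K : SimpleGraph X}

lemma twoConnected_of_cycle {n : ℕ} [NeZero n] (hn : 3 ≤ n) (w : ZMod n → X) (hw : Bijective w)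
    (hadj : ∀ i, K.Adj (w i) (w (i + 1))) : TwoConnected K := by
  obtain ⟨m, rfl⟩ : ∃ m, n = m + 2 := ⟨n - 2, by omega⟩
  refine twoConnected_of_connected_induce_compl_s14 ?_ fun x => ?_
  · rwa [← Fintype.card_of_bijective hw, ZMod.card]
  obtain ⟨k, rfl⟩ := hw.2 x
  -- removing `w k` from the cycle leaves the path `w (k + 1), …, w (k + m + 1)`
  refine (pathGraph_connected m).induce_of_contraction (fun j => w (k + (j + 1 : ℕ))) ?_ ?_ ?_
  · intro j hj
    have h0 : ((j + 1 : ℕ) : ZMod (m + 2)) = 0 := by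
      simpa using hw.1 hj
    rw [ZMod.natCast_eq_zero_iff] at h0
    exact absurd (Nat.le_of_dvd (Nat.succ_pos _) h0) (by omega)
  · rintro y hy
    obtain ⟨i, rfl⟩ := hw.2 y
    have hik : i ≠ k := fun h => hy (by rw [h]; rfl)
    refine ⟨⟨(i - k - 1).val, ?_⟩, ?_⟩
    · have hlt := ZMod.val_lt (i - k - 1)
      refine lt_of_le_of_ne (by omega) fun h => hik ?_
      have h' := ZMod.natCast_zmod_val (i - k - 1)
      rw [h] at h'
      have hz := ZMod.natCast_self (m + 2)
      push_cast at h' hz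
      linear_combination -h' + hz
    · simp only [Nat.cast_add, ZMod.natCast_zmod_val, Nat.cast_one]
      ring_nf
  · intro j j' h
    right
    rcases pathGraph_adj.1 h with h | h
    · rw [← h, Nat.cast_add (j + 1 : ℕ), ← add_assoc]
      exact hadj _
    · rw [← h, Nat.cast_add (j' + 1 : ℕ), ← add_assoc]
      exact (hadj _).symm

def IsInducedCycle5 (G : SimpleGraph V) (v : ZMod 5 → V) : Prop :=
  Injective v ∧ (∀ i, G.Adj (v i) (v (i + 1))) ∧ ∀ i, ¬G.Adj (v i) (v (i + 2))

lemma IsInducedCycle5.twoConnected_induce [DecidableEq V] {G : SimpleGraph V} {v : ZMod 5 → V}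
    (hv : IsInducedCycle5 G v) :
    TwoConnected (G.induce (Set.range v)) ∧ TwoConnected (G.induce (Set.range v))ᶜ := by
  obtain ⟨hinj, hadj, hnadj⟩ := hv
  let w : ZMod 5 → Set.range v := fun i => ⟨v i, i, rfl⟩
  have hw : Bijective w :=
    ⟨fun i j h => hinj (congrArg Subtype.val h), by rintro ⟨_, i, rfl⟩; exact ⟨i, rfl⟩⟩
  have hdouble : Bijective fun i : ZMod 5 => 2 * i := by decide
  -- the complement of the 5-cycle `v` is the 5-cycle `v 0, v 2, v 4, v 1, v 3`
  refine ⟨twoConnected_of_cycle (by norm_num) w hw hadj,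
    twoConnected_of_cycle (by norm_num) (fun i => w (2 * i)) (hw.comp hdouble) fun i => ?_⟩
  rw [compl_adj, mul_add, mul_one]
  refine ⟨hw.1.ne ?_, hnadj (2 * i)⟩
  rw [ne_eq, left_eq_add]
  decide

lemma IsIMMNon2Cograph.not_isInducedCycle5 [Fintype V] [DecidableEq V] {G : SimpleGraph V}
    (hG : IsIMMNon2Cograph G) (hcard : 6 ≤ Fintype.card V) {v : ZMod 5 → V}
    (hv : IsInducedCycle5 G v) : False := by
  refine hG.not_twoConnected_induce ?_ hv.twoConnected_induce
  rw [Set.card_range_of_injective hv.1, ZMod.card]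
  omega

end Cycles

section DominatingEdge

variable {X : Type} {K : SimpleGraph X} {a c d : X}

lemma connected_induce_compl_of_dominating_edge (had : K.Adj a d) (hca : c ≠ a) (hcd : c ≠ d)
    (hdom : ∀ x, x ≠ a → x ≠ c → x ≠ d → K.Adj x a ∨ K.Adj x d) :
    (K.induce {c}ᶜ).Connected := by
  refine connected_of_forall_reachable ⟨a, hca.symm⟩ ?_
  rintro ⟨x, hx⟩
  have had' := had.induce_reachable (s := {c}ᶜ) hca.symm hcd.symm
  by_cases hxa : x = a
  · subst hxa; rfl
  by_cases hxd : x = d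
  · subst hxd; exact had'
  rcases hdom x hxa hx hxd with h | h
  · exact (h.induce_reachable _ _).symm
  · exact had'.trans (h.induce_reachable _ _).symm

variable [Fintype X]

lemma twoConnected_of_dominating_vertex_and_edge (hcard : 5 ≤ Fintype.card X) (hca : c ≠ a)
    (hcd : c ≠ d) (had : K.Adj a d)
    (hc : ∀ x, x ≠ a → x ≠ c → x ≠ d → K.Adj c x ∧ (K.Adj x a ∨ K.Adj x d))
    (ha : ∃ x, x ≠ a ∧ x ≠ c ∧ x ≠ d ∧ K.Adj x a)
    (hd : ∃ x, x ≠ a ∧ x ≠ c ∧ x ≠ d ∧ K.Adj x d) : TwoConnected K := by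
  classical
  refine twoConnected_of_connected_induce_compl_s14 (by omega) fun w => ?_
  by_cases hwc : w = c
  · exact hwc ▸ connected_induce_compl_of_dominating_edge had hca hcd fun x hxa hxc hxd =>
      (hc x hxa hxc hxd).2
  -- a neighbour of `c` through which `a` or `d` is reached after deleting `w`
  obtain ⟨x₀, hx₀a, hx₀c, hx₀d, hx₀w, hx₀⟩ : ∃ x, x ≠ a ∧ x ≠ c ∧ x ≠ d ∧ x ≠ w ∧
      (a ≠ w ∧ K.Adj x a ∨ d ≠ w ∧ K.Adj x d) := by
    by_cases hwa : w = a
    · obtain ⟨x, hxa, hxc, hxd, hx⟩ := hd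
      exact ⟨x, hxa, hxc, hxd, hwa ▸ hxa, .inr ⟨hwa ▸ (K.ne_of_adj had).symm, hx⟩⟩
    by_cases hwd : w = d
    · obtain ⟨x, hxa, hxc, hxd, hx⟩ := ha
      exact ⟨x, hxa, hxc, hxd, hwd ▸ hxd, .inl ⟨Ne.symm (hwd ▸ hwa), hx⟩⟩
    obtain ⟨x, -, hx⟩ := Finset.exists_mem_notMem_of_card_lt_card (s := {a, c, d, w})
      (t := Finset.univ) (by grind [Finset.card_le_four, Finset.card_univ])
    simp only [Finset.mem_insert, Finset.mem_singleton, not_or] at hx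
    obtain ⟨hxa, hxc, hxd, hxw⟩ := hx
    exact ⟨x, hxa, hxc, hxd, hxw, (hc x hxa hxc hxd).2.imp (⟨Ne.symm hwa, ·⟩) (⟨Ne.symm hwd, ·⟩)⟩
  have hcx₀ := (hc x₀ hx₀a hx₀c hx₀d).1.induce_reachable (s := {w}ᶜ) (Ne.symm hwc) hx₀w
  let R : X → Prop := fun y => ∃ hy : y ≠ w, (K.induce {w}ᶜ).Reachable ⟨c, Ne.symm hwc⟩ ⟨y, hy⟩
  have hRad : R a ∨ R d := hx₀.imp (fun ⟨haw, h⟩ => ⟨haw, hcx₀.trans (h.induce_reachable _ _)⟩)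
    fun ⟨hdw, h⟩ => ⟨hdw, hcx₀.trans (h.induce_reachable _ _)⟩
  have hRa : a ≠ w → R a := fun haw =>
    hRad.elim id fun ⟨hdw, h⟩ => ⟨haw, h.trans (had.symm.induce_reachable _ _)⟩
  have hRd : d ≠ w → R d := fun hdw =>
    hRad.elim (fun ⟨haw, h⟩ => ⟨hdw, h.trans (had.induce_reachable _ _)⟩) id
  refine connected_of_forall_reachable ⟨c, Ne.symm hwc⟩ ?_
  rintro ⟨x, hx⟩
  by_cases hxc : x = c
  · subst hxc; rfl
  by_cases hxa : x = a
  · subst hxa; exact (hRa hx).2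
  by_cases hxd : x = d
  · subst hxd; exact (hRd hx).2
  · exact (hc x hxa hxc hxd).1.induce_reachable _ hx

end DominatingEdge

namespace SimpleGraph

variable {V : Type} {G : SimpleGraph V} {a b c d r : V}

lemma adj_iff_of_degree_eq_two [Fintype V] [DecidableRel G.Adj] (hdeg : G.degree b = 2)
    (ha : G.Adj b a) (hc : G.Adj b c) (hac : a ≠ c) (v : V) : G.Adj b v ↔ v = a ∨ v = c := by
  classical
  have hN : G.neighborFinset b = {a, c} :=
    (Finset.eq_of_subset_of_card_le (by simp [Finset.insert_subset_iff, ha, hc])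
      (by simp [hdeg, hac])).symm
  rw [← mem_neighborFinset, hN]
  simp

lemma isInducedCycle5_of_common_neighbor (hab : a ≠ b) (hac : a ≠ c) (had : a ≠ d)
    (hbc : b ≠ c) (hbd : b ≠ d) (hcd : c ≠ d) (eab : G.Adj a b) (ebc : G.Adj b c)
    (ecd : G.Adj c d) (hNb : ∀ v, G.Adj b v → v = a ∨ v = c)
    (hNc : ∀ v, G.Adj c v → v = b ∨ v = d) (hnad : ¬G.Adj a d) (har : G.Adj a r)
    (hdr : G.Adj d r) : IsInducedCycle5 G ![a, b, c, d, r] := by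
  have hra : r ≠ a := (G.ne_of_adj har).symm
  have hrd : r ≠ d := (G.ne_of_adj hdr).symm
  have hrb : r ≠ b := fun h => by simpa [had.symm, hcd.symm] using hNb d (h ▸ hdr.symm)
  have hrc : r ≠ c := fun h => by simpa [hab, had] using hNc a (h ▸ har.symm)
  refine ⟨fun i j h => ?_, fun i => ?_, fun i => ?_⟩
  · fin_cases i <;> fin_cases j <;> first | rfl | exact absurd h ‹_› | exact absurd h.symm ‹_›
  · fin_cases i
    exacts [eab, ebc, ecd, hdr, har.symm]
  · fin_cases i
    exacts [fun h : G.Adj a c => by simpa [hab, had] using hNc a h.symm,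
      fun h : G.Adj b d => by simpa [had.symm, hcd.symm] using hNb d h,
      fun h : G.Adj c r => by simpa [hrb, hrd] using hNc r h,
      fun h : G.Adj d a => hnad h.symm,
      fun h : G.Adj r b => by simpa [hra, hrc] using hNb r h.symm]

lemma _root_.TwoConnected.exists_adj_off_path [Fintype V] (hG : TwoConnected G) (hab : a ≠ b)
    (had : a ≠ d) (hnad : ¬G.Adj a d) (hc : ∀ v, G.Adj c v → v = b ∨ v = d) :
    ∃ u, u ≠ a ∧ u ≠ b ∧ u ≠ c ∧ u ≠ d ∧ G.Adj a u := by
  obtain ⟨u, hub, hau⟩ := hG.exists_adj_ne hab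
  refine ⟨u, (G.ne_of_adj hau).symm, hub, ?_, fun h => hnad (h ▸ hau), hau⟩
  rintro rfl
  rcases hc a hau.symm with h | h
  exacts [hab h, had h]

/-- When `b` has exactly the neighbours `a` and `c`, this is the contraction of the edge `bc`. -/
def suppress (G : SimpleGraph V) (ha : a ≠ b) (hc : c ≠ b) : SimpleGraph ({b}ᶜ : Set V) :=
  G.induce {b}ᶜ ⊔ edge ⟨a, ha⟩ ⟨c, hc⟩

lemma suppress_adj {ha : a ≠ b} {hc : c ≠ b} {x y : ({b}ᶜ : Set V)} :
    (G.suppress ha hc).Adj x y ↔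
      G.Adj x y ∨ (x.1 = a ∧ y.1 = c ∨ x.1 = c ∧ y.1 = a) ∧ x.1 ≠ y.1 := by
  simp [suppress, edge_adj, Subtype.ext_iff]

lemma compl_suppress_adj {ha : a ≠ b} {hc : c ≠ b} {x y : ({b}ᶜ : Set V)} :
    (G.suppress ha hc)ᶜ.Adj x y ↔
      x.1 ≠ y.1 ∧ ¬G.Adj x y ∧ ¬(x.1 = a ∧ y.1 = c ∨ x.1 = c ∧ y.1 = a) := by
  rw [compl_adj, suppress_adj, Ne, Subtype.ext_iff]
  tauto

lemma isInducedMinor_suppress (ha : a ≠ b) (hc : c ≠ b) (hb : ∀ v, G.Adj b v ↔ v = a ∨ v = c) :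
    IsInducedMinor G (G.suppress ha hc) := by
  classical
  refine ⟨fun w => if w.1 = c then {b, c} else {w.1}, fun w => ?_, fun w => ?_, ?_, ?_⟩
  · dsimp only
    split_ifs <;> simp
  · dsimp only
    by_cases hw : w.1 = c
    · rw [if_pos hw]
      exact induce_pair_connected_of_adj ((hb c).2 (Or.inr rfl))
    · rw [if_neg hw, induce_singleton_eq_top]
      exact connected_top
  · intro w w' hww'
    have hne : w.1 ≠ w'.1 := fun h => hww' (Subtype.ext h)
    have hwb : w.1 ≠ b := w.2
    have hw'b : w'.1 ≠ b := w'.2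
    dsimp only
    split_ifs <;> simp only [Set.disjoint_insert_left, Set.disjoint_insert_right,
      Set.disjoint_singleton, Set.mem_insert_iff, Set.mem_singleton_iff] <;> grind
  · intro w w' hww'
    have hne : w.1 ≠ w'.1 := fun h => hww' (Subtype.ext h)
    have hwb : w.1 ≠ b := w.2
    have hw'b : w'.1 ≠ b := w'.2
    dsimp only
    split_ifs <;> simp only [suppress_adj, Set.mem_insert_iff, Set.mem_singleton_iff,
      exists_eq_or_imp, exists_eq_left, hb, G.adj_comm _ b] <;> grind

section Finite

variable [Fintype V] [DecidableEq V]

lemma _root_.TwoConnected.suppress (hG : TwoConnected G) (ha : a ≠ b) (hc : c ≠ b) (hac : a ≠ c)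
    (hb : ∀ v, G.Adj b v → v = a ∨ v = c) (hcard : 4 ≤ Fintype.card V) :
    TwoConnected (G.suppress ha hc) := by
  refine twoConnected_of_connected_induce_compl_s14
    (by rw [Fintype.card_compl_singleton]; omega) fun w => ?_
  -- contract the edge from `b` to a neighbour of `b` that survives the deletion of `w`
  let z : ({b}ᶜ : Set V) := if w.1 = c then ⟨a, ha⟩ else ⟨c, hc⟩
  have hzw : z ≠ w := by
    intro h
    by_cases hw : w.1 = c <;> simp only [z, hw, if_true, if_false] at h <;> grind
  let f : ({w.1}ᶜ : Set V) → ({b}ᶜ : Set V) := fun x => if hx : x.1 = b then z else ⟨x.1, hx⟩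
  have hfb : ∀ x : ({w.1}ᶜ : Set V), G.Adj b x → f x = z ∨ (G.suppress ha hc).Adj z (f x) := by
    intro x hbx
    have hxb : x.1 ≠ b := (G.ne_of_adj hbx).symm
    have hxw : x.1 ≠ w.1 := x.2
    simp only [f, dif_neg hxb, z, Subtype.ext_iff, suppress_adj]
    by_cases hw : w.1 = c <;> simp only [hw, if_true, if_false] <;> grind
  refine (hG.2.2 w.1).induce_of_contraction f ?_ ?_ ?_
  · intro x
    by_cases hx : x.1 = b
    · simpa [f, hx] using hzw
    · have hxw : x.1 ≠ w.1 := x.2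
      simpa [f, hx, Subtype.ext_iff] using hxw
  · intro y hy
    refine ⟨⟨y.1, fun h => hy (Subtype.ext h)⟩, ?_⟩
    simp [f, show y.1 ≠ b from y.2]
  · rintro ⟨x, hxw⟩ ⟨x', hx'w⟩ (hxx' : G.Adj x x')
    by_cases hx : x = b
    · subst hx
      simpa [f, eq_comm] using hfb ⟨x', hx'w⟩ hxx'
    by_cases hx' : x' = b
    · subst hx'
      simpa [f, adj_comm] using hfb ⟨x, hxw⟩ hxx'.symm
    · right
      simp only [f, dif_neg hx, dif_neg hx', suppress_adj]
      exact Or.inl hxx'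

lemma _root_.TwoConnected.twoConnected_compl_suppress (hG : TwoConnected G) (hab : a ≠ b)
    (hac : a ≠ c) (had : a ≠ d) (hcb : c ≠ b) (hbd : b ≠ d) (hcd : c ≠ d)
    (hNb : ∀ v, G.Adj b v → v = a ∨ v = c) (hNc : ∀ v, G.Adj c v → v = b ∨ v = d)
    (hnad : ¬G.Adj a d) (hcommon : ∀ r, G.Adj a r → ¬G.Adj d r)
    (hcard : 6 ≤ Fintype.card V) : TwoConnected (G.suppress hab hcb)ᶜ := by
  obtain ⟨u, hua, hub, huc, hud, hau⟩ := hG.exists_adj_off_path hab had hnad hNc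
  obtain ⟨u', hu'd, hu'c, hu'b, hu'a, hdu'⟩ := hG.exists_adj_off_path hcd.symm had.symm
    (fun h => hnad h.symm) fun v h => (hNb v h).symm
  refine twoConnected_of_dominating_vertex_and_edge
    (a := ⟨a, hab⟩) (c := ⟨c, hcb⟩) (d := ⟨d, hbd.symm⟩)
    (by rw [Fintype.card_compl_singleton]; omega) (fun h => hac (congrArg Subtype.val h).symm)
    (fun h => hcd (congrArg Subtype.val h))
    (compl_suppress_adj.2 ⟨had, hnad, by grind⟩) ?_ ⟨⟨u', hu'b⟩, ?_⟩ ⟨⟨u, hub⟩, ?_⟩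
  · rintro ⟨x, hxb⟩ hxa hxc hxd
    simp only [ne_eq, Subtype.ext_iff] at hxa hxc hxd
    refine ⟨compl_suppress_adj.2 ⟨Ne.symm hxc, fun h => ?_, by grind⟩, ?_⟩
    · rcases hNc x h with h | h
      exacts [hxb h, hxd h]
    by_cases hax : G.Adj a x
    · exact .inr (compl_suppress_adj.2 ⟨hxd, fun h => hcommon x hax h.symm, by grind⟩)
    · exact .inl (compl_suppress_adj.2 ⟨hxa, fun h => hax h.symm, by grind⟩)
  · simp only [ne_eq, Subtype.ext_iff]
    exact ⟨hu'a, hu'c, hu'd,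
      compl_suppress_adj.2 ⟨hu'a, fun h => hcommon u' h.symm hdu', by grind⟩⟩
  · simp only [ne_eq, Subtype.ext_iff]
    exact ⟨hua, huc, hud, compl_suppress_adj.2 ⟨hud, fun h => hcommon u hau h.symm, by grind⟩⟩

end Finite

end SimpleGraph

theorem path_three_basic {V : Type} [Fintype V] [DecidableEq V]
    (G : SimpleGraph V) [DecidableRel G.Adj]
    (hG : IsIMMNon2Cograph G) (hcard : 6 ≤ Fintype.card V)
    (a b c d : V)
    (hab : a ≠ b) (hac : a ≠ c) (had : a ≠ d) (hbc : b ≠ c) (hbd : b ≠ d)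
    (hcd : c ≠ d)
    (eab : G.Adj a b) (ebc : G.Adj b c) (ecd : G.Adj c d)
    (hdb : G.degree b = 2) (hdc : G.degree c = 2) :
    G.Adj a d := by
  have hNb := adj_iff_of_degree_eq_two hdb eab.symm ebc hac
  have hNc := adj_iff_of_degree_eq_two hdc ebc.symm ecd hbd
  by_contra hnad
  by_cases hcommon : ∃ r, G.Adj a r ∧ G.Adj d r
  · obtain ⟨r, har, hdr⟩ := hcommon
    exact hG.not_isInducedCycle5 hcard <| isInducedCycle5_of_common_neighbor hab hac had hbc hbd
      hcd eab ebc ecd (fun v => (hNb v).1) (fun v => (hNc v).1) hnad har hdr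
  · push Not at hcommon
    have hG2 := hG.twoConnected.1
    exact (hG.2 _ _ (isInducedMinor_suppress hab hbc.symm hNb)
      (Fintype.card_subtype_lt (x := b) (by simp))).not_twoConnected
      ⟨hG2.suppress _ _ hac (fun v => (hNb v).1) (by omega),
        hG2.twoConnected_compl_suppress hab hac had hbc.symm hbd hcd (fun v => (hNb v).1)
          (fun v => (hNc v).1) hnad hcommon hcard⟩
end
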